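/- The worst case non-distinctiveness of a pair of goals is at most their worst case distinctiveness: if every plan in Π' and Π'' has length at least 1 and wcnd(G',G'') = min { n | Π'ₙ symmetric-difference Π''ₙ is nonempty } is well-defined (the set is nonempty), then wcnd(G',G'') ≤ wcd(G',G'') + 1, where wcd(G',G'') is the maximal common prefix length between plans of Π' and plans of Π''. -/
import Mathlib


/-- Length of the longest common prefix of two lists. -/
def lcpLen {α : Type*} [DecidableEq α] : List α → List α → ℕ
  | a :: as, b :: bs => if a = b then lcpLen as bs + 1 else 0
  | _, _ => 0

lemma lcpLen_take {α : Type*} [DecidableEq α] :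
    ∀ (n : ℕ) (a b : List α), a.take n = b.take n → n ≤ lcpLen a b ∨ a = b := by
  intro n
  induction n with
  | zero => intro a b _; left; exact Nat.zero_le _
  | succ n ih =>
    intro a b h
    match a, b with
    | [], b =>
      right
      simpa using h.symm.trans (List.take_nil)
    | a :: as, [] =>
      right
      simpa using h.trans (List.take_nil)
    | a :: as, b :: bs =>
      simp only [List.take_succ_cons, List.cons.injEq] at h
      obtain ⟨rfl, h2⟩ := h
      rcases ih as bs h2 with h3 | rfl
      · left
        simp [lcpLen, Nat.succ_le_succ h3]
      · right; rfl

/-- wcnd(G',G'') ≤ wcd(G',G'') + 1. -/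
theorem stmt4 {α : Type*} [DecidableEq α]
    (P' P'' : Finset (List α)) (h' : P'.Nonempty) (h'' : P''.Nonempty)
    (hlen' : ∀ π ∈ P', 1 ≤ π.length) (hlen'' : ∀ π ∈ P'', 1 ≤ π.length)
    (hD : {n : ℕ |
      (symmDiff (P'.image fun π => π.take n) (P''.image fun π => π.take n)).Nonempty}.Nonempty) :
    sInf {n : ℕ |
        (symmDiff (P'.image fun π => π.take n) (P''.image fun π => π.take n)).Nonempty}
      ≤ (P'.sup fun π' => P''.sup fun π'' => lcpLen π' π'') + 1 := by
  set w := (P'.sup fun π' => P''.sup fun π'' => lcpLen π' π'') with hw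
  by_contra hcon
  push_neg at hcon
  have hnotin : (w + 1) ∉ {n : ℕ |
      (symmDiff (P'.image fun π => π.take n) (P''.image fun π => π.take n)).Nonempty} := by
    intro hmem
    exact absurd (Nat.sInf_le hmem) (not_le.mpr hcon)
  have heq : (P'.image fun π => π.take (w + 1)) = (P''.image fun π => π.take (w + 1)) := by
    by_contra hne
    exact hnotin (Finset.nonempty_iff_ne_empty.mpr
      (fun h => hne (symmDiff_eq_bot.mp h)))
  -- show P' = P''
  have key : ∀ (A B : Finset (List α)),
      ((A.image fun π => π.take (w + 1)) = (B.image fun π => π.take (w + 1))) →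
      (∀ a ∈ A, ∀ b ∈ B, lcpLen a b ≤ w) → A ⊆ B := by
    intro A B hAB hsup a ha
    have : a.take (w + 1) ∈ B.image fun π => π.take (w + 1) := by
      rw [← hAB]; exact Finset.mem_image_of_mem _ ha
    obtain ⟨b, hb, hab⟩ := Finset.mem_image.mp this
    rcases lcpLen_take (w + 1) a b hab.symm with h1 | rfl
    · exact absurd h1 (not_le.mpr (Nat.lt_succ_of_le (hsup a ha b hb)))
    · exact hb
  have hle : ∀ a ∈ P', ∀ b ∈ P'', lcpLen a b ≤ w := by
    intro a ha b hb
    exact le_trans (Finset.le_sup (f := fun π'' => lcpLen a π'') hb) (Finset.le_sup (f := fun π' => P''.sup fun π'' => lcpLen π' π'') ha)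
  have hsymm : ∀ a b : List α, lcpLen a b = lcpLen b a := by
    intro a b
    induction a generalizing b with
    | nil => cases b <;> simp [lcpLen]
    | cons x xs ih =>
      cases b with
      | nil => simp [lcpLen]
      | cons y ys =>
        simp only [lcpLen]
        by_cases hxy : x = y
        · subst hxy; simp [ih]
        · simp [hxy, Ne.symm hxy]
  have hPP : P' = P'' := by
    apply Finset.Subset.antisymm
    · exact key P' P'' heq hle
    · exact key P'' P' heq.symm (fun a ha b hb => (hsymm a b) ▸ hle b hb a ha)
  obtain ⟨n, hn⟩ := hD
  simp only [Set.mem_setOf_eq, hPP, symmDiff_self] at hn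
  exact absurd rfl (Finset.nonempty_iff_ne_empty.mp hn)
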